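/- For every natural number n, ∑_{k=0}^{2n} (-2)^k · binom(2n+1,k) · H_k / (k+1) = (4^n - 1)·H_{2n}/(n+1) + H_n/(2(n+1)) + (4^n - 1)/((n+1)(2n+1)). -/

import Mathlib

/-!
With `A(n) = ∑ⱼ C(n,j) xʲ Hⱼ` and `B(n) = ∑_{j ≥ 1} C(n,j) xʲ / j`, Pascal's rule gives
`A(n+1) = (1+x) A(n) + cₙ` and `B(n+1) = B(n) + cₙ` with `cₙ = ((1+x)ⁿ⁺¹ - 1)/(n+1)`.
Since `Hⱼ = Hⱼ₋₁ + 1/j`, the difference `A(n+1) - B(n+1)` is `∑_{j ≥ 1} C(n+1,j) xʲ Hⱼ₋₁`,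
which is `x (n+1)` times `∑ₖ C(n,k) xᵏ Hₖ/(k+1)` because `C(n,k)/(k+1) = C(n+1,k+1)/(n+1)`.
At `x = -2` two steps of the recurrences give `(A - B)(2m+2) = (A - B)(2m) + 4/(2m+1)`,
hence `(A - B)(2m) = 4 H₂ₘ - 2 Hₘ`; the theorem's sum is this full sum minus its top term.
-/

/-- The `n`-th harmonic number `H_n = 1 + 1/2 + ⋯ + 1/n` (with `H_0 = 0`). -/
noncomputable def H (n : ℕ) : ℝ := ∑ i ∈ Finset.range n, 1 / ((i : ℝ) + 1)

open Finset

theorem H_succ (n : ℕ) : H (n + 1) = H n + 1 / ((n : ℝ) + 1) :=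
  sum_range_succ _ n

theorem H_zero : H 0 = 0 :=
  sum_range_zero _

theorem cast_choose_div_add_one {K : Type*} [Field K] [CharZero K] (n k : ℕ) :
    (n.choose k : K) / (k + 1) = ((n + 1).choose (k + 1) : K) / (n + 1) := by
  rw [div_eq_div_iff (Nat.cast_add_one_ne_zero k) (Nat.cast_add_one_ne_zero n), mul_comm]
  exact_mod_cast Nat.add_one_mul_choose_eq n k

theorem sum_pow_succ_mul_choose_div {K : Type*} [Field K] [CharZero K] (x : K) (n : ℕ) :
    ∑ j ∈ range (n + 1), x ^ (j + 1) * (n.choose j : K) / (j + 1)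
      = ((1 + x) ^ (n + 1) - 1) / (n + 1) := by
  have binomial : (1 + x) ^ (n + 1)
      = ∑ j ∈ range (n + 1), x ^ (j + 1) * ((n + 1).choose (j + 1) : K) + 1 := by
    rw [add_comm 1 x, add_pow, sum_range_succ']
    simp
  rw [binomial, add_sub_cancel_right, sum_div]
  refine sum_congr rfl fun j _ => ?_
  rw [mul_div_assoc, cast_choose_div_add_one, mul_div_assoc]

noncomputable def binomHarmonicSum (x : ℝ) (n : ℕ) : ℝ :=
  ∑ j ∈ range (n + 1), x ^ j * (n.choose j : ℝ) * H j

theorem binomHarmonicSum_succ (x : ℝ) (n : ℕ) :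
    binomHarmonicSum x (n + 1)
      = (1 + x) * binomHarmonicSum x n + ((1 + x) ^ (n + 1) - 1) / (n + 1) := by
  have unshifted : ∑ i ∈ range (n + 1), (n.choose i : ℝ) * (x ^ i * H i) = binomHarmonicSum x n :=
    sum_congr rfl fun _ _ => by ring
  have shifted : ∑ i ∈ range (n + 1), (n.choose i : ℝ) * (x ^ (i + 1) * H (i + 1))
      = x * binomHarmonicSum x n + ((1 + x) ^ (n + 1) - 1) / (n + 1) := by
    rw [← sum_pow_succ_mul_choose_div, binomHarmonicSum, mul_sum, ← sum_add_distrib]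
    refine sum_congr rfl fun i _ => ?_
    rw [H_succ]
    ring
  calc binomHarmonicSum x (n + 1)
      = ∑ i ∈ range (n + 2), ((n + 1).choose i : ℝ) * (x ^ i * H i) :=
        sum_congr rfl fun _ _ => by ring
    _ = ∑ i ∈ range (n + 1), (n.choose i : ℝ) * (x ^ i * H i)
          + ∑ i ∈ range (n + 1), (n.choose i : ℝ) * (x ^ (i + 1) * H (i + 1)) :=
        sum_choose_succ_mul (fun i _ => x ^ i * H i) n
    _ = (1 + x) * binomHarmonicSum x n + ((1 + x) ^ (n + 1) - 1) / (n + 1) := by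
        rw [unshifted, shifted]
        ring

def binomPowDivSum {K : Type*} [Field K] (x : K) (n : ℕ) : K :=
  ∑ k ∈ range n, x ^ (k + 1) * (n.choose (k + 1) : K) / (k + 1)

theorem binomPowDivSum_succ {K : Type*} [Field K] [CharZero K] (x : K) (n : ℕ) :
    binomPowDivSum x (n + 1) = binomPowDivSum x n + ((1 + x) ^ (n + 1) - 1) / (n + 1) := by
  have pascal : binomPowDivSum x (n + 1)
      = ∑ k ∈ range (n + 1), x ^ (k + 1) * (n.choose (k + 1) : K) / (k + 1)
        + ∑ k ∈ range (n + 1), x ^ (k + 1) * (n.choose k : K) / (k + 1) := by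
    rw [binomPowDivSum, ← sum_add_distrib]
    refine sum_congr rfl fun k _ => ?_
    rw [Nat.choose_succ_succ', Nat.cast_add]
    ring
  rw [pascal, sum_range_succ, Nat.choose_succ_self, sum_pow_succ_mul_choose_div]
  simp [binomPowDivSum]

noncomputable def shiftedBinomHarmonicSum (x : ℝ) (n : ℕ) : ℝ :=
  ∑ k ∈ range n, x ^ (k + 1) * (n.choose (k + 1) : ℝ) * H k

theorem shiftedBinomHarmonicSum_eq_sub (x : ℝ) (n : ℕ) :
    shiftedBinomHarmonicSum x n = binomHarmonicSum x n - binomPowDivSum x n := by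
  rw [binomHarmonicSum, sum_range_succ', binomPowDivSum, shiftedBinomHarmonicSum,
    eq_sub_iff_add_eq, ← sum_add_distrib]
  simp only [H_succ, H_zero, mul_zero, add_zero]
  refine sum_congr rfl fun k _ => ?_
  ring

theorem shiftedBinomHarmonicSum_succ (x : ℝ) (n : ℕ) :
    shiftedBinomHarmonicSum x (n + 1)
      = x * (n + 1) * ∑ k ∈ range (n + 1), x ^ k * (n.choose k : ℝ) * H k / (k + 1) := by
  rw [shiftedBinomHarmonicSum, mul_sum]
  refine sum_congr rfl fun k _ => ?_
  rw [mul_div_right_comm, mul_div_assoc _ (n.choose k : ℝ), cast_choose_div_add_one]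
  field_simp
  ring

-- At `x = -2` the common term `((1 + x) ^ (k + 1) - 1) / (k + 1)` of the two recurrences vanishes
-- for odd `k`, while `A` changes sign at each step.
theorem shiftedBinomHarmonicSum_neg_two_add_two (m : ℕ) :
    shiftedBinomHarmonicSum (-2) (2 * m + 2)
      = shiftedBinomHarmonicSum (-2) (2 * m) + 4 / (2 * m + 1) := by
  have odd : (1 + -2 : ℝ) ^ (2 * m + 1) = -1 := by norm_num [pow_succ, pow_mul]
  have even : (1 + -2 : ℝ) ^ (2 * m + 1 + 1) = 1 := by norm_num [pow_succ, pow_mul]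
  simp only [shiftedBinomHarmonicSum_eq_sub, binomHarmonicSum_succ, binomPowDivSum_succ, odd, even]
  push_cast
  ring

theorem shiftedBinomHarmonicSum_neg_two_even (m : ℕ) :
    shiftedBinomHarmonicSum (-2) (2 * m) = 4 * H (2 * m) - 2 * H m := by
  induction m with
  | zero => simp [shiftedBinomHarmonicSum, H_zero]
  | succ m ih =>
    rw [mul_add_one, shiftedBinomHarmonicSum_neg_two_add_two, ih, H_succ (2 * m + 1),
      H_succ (2 * m), H_succ m]
    push_cast
    field_simp
    ring

/-- An intermediate evaluation established in the proof of the paper's main Corollary. -/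
theorem stmt_5 (n : ℕ) :
    ∑ k ∈ Finset.range (2 * n + 1),
      (-2 : ℝ) ^ k * ((2 * n + 1).choose k : ℝ) * H k / ((k : ℝ) + 1)
    = ((4 : ℝ) ^ n - 1) * H (2 * n) / ((n : ℝ) + 1) + H n / (2 * ((n : ℝ) + 1))
        + ((4 : ℝ) ^ n - 1) / (((n : ℝ) + 1) * (2 * (n : ℝ) + 1)) := by
  have key := shiftedBinomHarmonicSum_succ (-2) (2 * n + 1)
  rw [sum_range_succ] at key
  set S := ∑ k ∈ range (2 * n + 1), (-2 : ℝ) ^ k * ((2 * n + 1).choose k : ℝ) * H k / ((k : ℝ) + 1)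
  have hS : S = shiftedBinomHarmonicSum (-2) (2 * n + 1 + 1) / (-2 * ((2 * n + 1 : ℕ) + 1))
      - (-2) ^ (2 * n + 1) * ((2 * n + 1).choose (2 * n + 1) : ℝ) * H (2 * n + 1)
        / ((2 * n + 1 : ℕ) + 1) := by
    rw [eq_sub_iff_add_eq, eq_div_iff (by positivity), key]
    ring
  have four_pow : (-2 : ℝ) ^ (2 * n + 1) = -2 * 4 ^ n := by
    rw [pow_succ, pow_mul]
    norm_num
    ring
  rw [hS, ← mul_add_one 2 n, shiftedBinomHarmonicSum_neg_two_even, Nat.choose_self, four_pow,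
    mul_add_one 2 n, H_succ (2 * n + 1), H_succ (2 * n), H_succ n]
  push_cast
  field_simp
  ring
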